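/- arXiv:2511.05676 — 4 statements merged into one kernel-verified Lean document; each statement's English description precedes it below -/
import Mathlib

section
/- Let S be a nonempty h-admissible set and m := m(S). For all n ≥ m + h(m) − 1, 𝓘_h(S;n) = Σ_{k=0}^{m} a_k(S) · C(n − h(m) + 1, k), where a_k(S) := #{π ∈ I_h(S, m + h(m) − 1) : {π_1, …, π_m} ∩ [h(m), m + h(m) − 1] = [h(m), h(m) + k − 1]} (with [h(m), h(m)−1] understood as the empty set when k = 0). -/
open Finset

/-- The 1-based `k`-th entry (as a value in `{1,…,n}`) of a permutation of `Fin n`. -/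
def entry {n : ℕ} (π : Equiv.Perm (Fin n)) (k : ℕ) : ℕ :=
  if hk : k - 1 < n then ((π ⟨k - 1, hk⟩ : Fin n) : ℕ) + 1 else 0

/-- The set of possible h-inversions `P_h = {(i,j) : 0 < i, i < j ≤ h i}`. -/
def Ph (h : ℕ → ℕ) : Set (ℕ × ℕ) := {p | 0 < p.1 ∧ p.1 < p.2 ∧ p.2 ≤ h p.1}

/-- The set of h-inversions of a permutation `π ∈ S_n`, as 1-based pairs:
`inv_h(π) = {(i,j) : i < j ≤ min(h i, n), π_i > π_j}`. -/
def invh (h : ℕ → ℕ) {n : ℕ} (π : Equiv.Perm (Fin n)) : Finset (ℕ × ℕ) :=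
  ((Finset.univ : Finset (Fin n × Fin n)).filter
      (fun p => (p.1 : ℕ) < (p.2 : ℕ) ∧ (p.2 : ℕ) + 1 ≤ h ((p.1 : ℕ) + 1) ∧ π p.2 < π p.1)).image
    (fun p => ((p.1 : ℕ) + 1, (p.2 : ℕ) + 1))

/-- `I_h(S,n)`, the set of permutations of `S_n` with h-inversion set `S`. -/
def Ih (h : ℕ → ℕ) (S : Finset (ℕ × ℕ)) (n : ℕ) : Finset (Equiv.Perm (Fin n)) :=
  Finset.univ.filter (fun π => invh h π = S)

/-- `𝓘_h(S;n) = #I_h(S,n)`. -/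
def Icount (h : ℕ → ℕ) (S : Finset (ℕ × ℕ)) (n : ℕ) : ℕ := (Ih h S n).card

/-- `S` is h-admissible when it is the h-inversion set of some permutation. -/
def Admissible (h : ℕ → ℕ) (S : Finset (ℕ × ℕ)) : Prop := ∃ n, (Ih h S n).Nonempty

/-- `j(S)`, the largest index appearing in a pair of `S`. -/
def jS (S : Finset (ℕ × ℕ)) : ℕ := S.sup Prod.snd

/-- `m(S)`, the maximum descent of `S`. -/
def mS (S : Finset (ℕ × ℕ)) : ℕ := (S.filter fun p => p.2 = p.1 + 1).sup Prod.fst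

/-- `t(σ) = max{σ_k : 1 ≤ k ≤ j(S), h(k) ≥ j(S)+1}`. -/
def tOf (h : ℕ → ℕ) (S : Finset (ℕ × ℕ)) (σ : Equiv.Perm (Fin (jS S))) : ℕ :=
  ((Finset.Icc 1 (jS S)).filter fun k => jS S + 1 ≤ h k).sup (entry σ)

/-- `B_k(S,n)`, the permutations in `I_h(S,n)` with entry `k` in position `h(m(S))`. -/
def Bset (h : ℕ → ℕ) (S : Finset (ℕ × ℕ)) (k n : ℕ) : Finset (Equiv.Perm (Fin n)) :=
  (Ih h S n).filter fun π => entry π (h (mS S)) = k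

/-- The coefficient `b_k(S) = #B_k(S, h(m(S)))`. -/
def bCoeff (h : ℕ → ℕ) (S : Finset (ℕ × ℕ)) (k : ℕ) : ℕ := (Bset h S k (h (mS S))).card

/-- The coefficient `a_k(S)`. -/
def aCoeff (h : ℕ → ℕ) (S : Finset (ℕ × ℕ)) (k : ℕ) : ℕ :=
  ((Ih h S (mS S + h (mS S) - 1)).filter fun π =>
    ((Finset.Icc 1 (mS S)).image (entry π)) ∩ Finset.Icc (h (mS S)) (mS S + h (mS S) - 1)
      = Finset.Icc (h (mS S)) (h (mS S) + k - 1)).card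

/-- The length (number of inversions) of a permutation. -/
def lenPerm {n : ℕ} (π : Equiv.Perm (Fin n)) : ℕ :=
  ((Finset.univ : Finset (Fin n × Fin n)).filter fun p => p.1 < p.2 ∧ π p.2 < π p.1).card

/-- `ℓ_{[a,b]}(A) = #{(x,y) ∈ [a,b]² : x > y, x ∈ A, y ∉ A}`. -/
def lenSet (a b : ℕ) (A : Finset ℕ) : ℕ :=
  ((Finset.Icc a b ×ˢ Finset.Icc a b).filter fun q => q.2 < q.1 ∧ q.1 ∈ A ∧ q.2 ∉ A).card

/-!
Past its last descent `m = m(S)` a permutation of `I_h(S, N)` is increasing (every descent is an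
`h`-inversion because `h(i) > i`), so it is the injective word `v` of its first `m` letters
followed by the remaining values in increasing order. Its `h`-inversions compare a letter
`v_a`, `a ≤ m`, only with positions `≤ h(a) ≤ h(m) = H`, and if `v_a ≥ H` then at least `H - m`
unused values lie below `v_a`, so `v_a` exceeds every letter in positions `m + 1, …, H`.
Hence `inv_h` only sees the values of `v` below `H` and the relative order of the others, and
relabelling the set `B` of values `≥ H` in `v` order-preservingly onto any other set of the same
size inside `[H, N']` is a bijection between the corresponding fibres of `I_h(S, N)` and
`I_h(S, N')`. Comparing with `N' = m + H - 1` and `B' = [H, H + k - 1]` turns each fibre with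
`#B = k` into `a_k(S)`, and there are `C(n - H + 1, k)` such sets `B` in `[H, n]`.
-/

namespace HInversion

open Function Nat

section Entry

variable {N : ℕ} (π : Equiv.Perm (Fin N))

theorem entry_of_lt {i : ℕ} (hi : i < N) : entry π (i + 1) = π ⟨i, hi⟩ + 1 := by
  simp [entry, hi]

theorem entry_mem_Icc {b : ℕ} (hb : b ∈ Icc 1 N) : entry π b ∈ Icc 1 N := by
  obtain ⟨i, rfl⟩ : ∃ i, b = i + 1 := ⟨b - 1, by grind⟩
  have hi : i < N := by grind
  simp only [entry_of_lt π hi, mem_Icc]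
  grind

theorem entry_lt_entry_iff {a b : ℕ} (ha : a ∈ Icc 1 N) (hb : b ∈ Icc 1 N) :
    entry π a < entry π b ↔ π ⟨a - 1, by grind⟩ < π ⟨b - 1, by grind⟩ := by
  simp only [entry, dif_pos (show a - 1 < N by grind), dif_pos (show b - 1 < N by grind),
    add_lt_add_iff_right, Fin.val_fin_lt]

theorem entry_injOn : Set.InjOn (entry π) (Icc 1 N) := by
  intro a ha b hb hab
  simp only [coe_Icc, Set.mem_Icc] at ha hb
  simp only [entry, show a - 1 < N by grind, show b - 1 < N by grind, dif_pos,
    add_left_inj, Fin.val_inj, EmbeddingLike.apply_eq_iff_eq, Fin.mk.injEq] at hab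
  grind

theorem exists_entry_eq {y : ℕ} (hy : y ∈ Icc 1 N) : ∃ b ∈ Icc 1 N, entry π b = y := by
  have hy' : y - 1 < N := by grind
  refine ⟨π.symm ⟨y - 1, hy'⟩ + 1, by simp, ?_⟩
  rw [entry_of_lt π (π.symm _).isLt]
  simp only [Fin.eta, Equiv.apply_symm_apply]
  grind

theorem ext_of_entry {σ : Equiv.Perm (Fin N)}
    (h : ∀ b ∈ Icc 1 N, entry π b = entry σ b) : π = σ := by
  ext i
  have := h (i + 1) (by simp)
  rwa [entry_of_lt π i.isLt, entry_of_lt σ i.isLt, add_left_inj] at this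

theorem mem_invh {h : ℕ → ℕ} {a b : ℕ} :
    (a, b) ∈ invh h π ↔ 1 ≤ a ∧ a < b ∧ b ≤ N ∧ b ≤ h a ∧ entry π b < entry π a := by
  simp only [invh, mem_image, mem_filter, mem_univ, true_and, Prod.exists, Prod.mk.injEq]
  constructor
  · rintro ⟨i, j, ⟨hij, hjh, hπ⟩, rfl, rfl⟩
    rw [entry_of_lt π j.isLt, entry_of_lt π i.isLt]
    simp only [Fin.eta, add_lt_add_iff_right, Fin.val_fin_lt]
    grind
  · rintro ⟨ha, hab, hbN, hbh, hlt⟩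
    rw [entry_lt_entry_iff π (by simp; grind) (by simp; grind)] at hlt
    refine ⟨⟨a - 1, by grind⟩, ⟨b - 1, by grind⟩, ⟨?_, ?_, hlt⟩, ?_, ?_⟩ <;> simp <;> grind

end Entry

section Descents

variable {h : ℕ → ℕ} {S : Finset (ℕ × ℕ)} {N : ℕ} {π : Equiv.Perm (Fin N)}

theorem le_mS_of_mem {d : ℕ} (hd : (d, d + 1) ∈ S) : d ≤ mS S := by
  unfold mS
  exact le_sup (f := Prod.fst) (b := (d, d + 1)) (by simp [hd])

theorem strictMonoOn_entry_of_mem_Ih (hgt : ∀ i : ℕ, 0 < i → i < h i) (hπ : π ∈ Ih h S N) :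
    StrictMonoOn (entry π) (Set.Icc (mS S + 1) N) := by
  refine strictMonoOn_of_lt_add_one Set.ordConnected_Icc fun a _ ha ha1 => ?_
  simp only [Set.mem_Icc] at ha ha1
  by_contra hle
  have hne : entry π (a + 1) ≠ entry π a := fun heq =>
    absurd (entry_injOn π (by simp; grind) (by simp; grind) heq) (by grind)
  have hdes : (a, a + 1) ∈ invh h π := by
    rw [mem_invh]
    have := hgt a (by grind)
    grind
  rw [(mem_filter.1 hπ).2] at hdes
  have := le_mS_of_mem hdes
  grind

theorem one_le_mS (hgt : ∀ i : ℕ, 0 < i → i < h i) (hS : S.Nonempty) (hπ : π ∈ Ih h S N) :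
    1 ≤ mS S := by
  by_contra! hm
  obtain ⟨⟨a, b⟩, hab⟩ := hS
  rw [← (mem_filter.1 hπ).2, mem_invh] at hab
  have hmono := strictMonoOn_entry_of_mem_Ih hgt hπ
  rw [Nat.lt_one_iff.1 hm] at hmono
  have := hmono (a := a) (b := b) (by grind) (by grind) (by grind)
  grind

end Descents

section SortedExtension

variable {m N : ℕ} {v : Fin m → ℕ}

structure IsArrangement (N : ℕ) (v : Fin m → ℕ) : Prop where
  injective : Injective v
  mem_Icc : ∀ i, v i ∈ Icc 1 N

abbrev IsFree (v : Fin m → ℕ) (y : ℕ) : Prop := y ≠ 0 ∧ ∀ i, v i ≠ y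

theorem infinite_isFree (v : Fin m → ℕ) : (Set.ofPred (IsFree v)).Infinite := by
  refine (Set.Ioi_infinite (univ.sup v)).mono fun y hy => ⟨by grind, fun i hi => ?_⟩
  have := le_sup (f := v) (mem_univ i)
  grind

theorem IsArrangement.count_isFree (hv : IsArrangement N v) :
    count (IsFree v) (N + 1) = N - m := by
  have hfree : {y ∈ range (N + 1) | IsFree v y} = Icc 1 N \ univ.image v := by
    ext y
    simp only [mem_filter, mem_range, mem_sdiff, mem_image, mem_univ, true_and]
    grind
  have hsub : univ.image v ⊆ Icc 1 N := by
    simpa [image_subset_iff] using hv.mem_Icc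
  rw [count_eq_card_filter_range, hfree, card_sdiff_of_subset hsub,
    card_image_of_injective _ hv.injective, Finset.card_univ, Fintype.card_fin, Nat.card_Icc,
    Nat.add_sub_cancel]

/-- Positions are 0-based and values 1-based: `entry (sortedExt N v) (i + 1) = extWord v i`. -/
noncomputable def extWord (v : Fin m → ℕ) (i : ℕ) : ℕ :=
  if hi : i < m then v ⟨i, hi⟩ else nth (IsFree v) (i - m)

theorem extWord_of_lt (v : Fin m → ℕ) (i : Fin m) : extWord v i = v i := by
  simp [extWord]

theorem extWord_of_le (v : Fin m → ℕ) {i : ℕ} (hi : m ≤ i) :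
    extWord v i = nth (IsFree v) (i - m) := by
  simp [extWord, not_lt.2 hi]

theorem isFree_extWord (v : Fin m → ℕ) {i : ℕ} (hi : m ≤ i) : IsFree v (extWord v i) := by
  rw [extWord_of_le v hi]
  exact nth_mem_of_infinite (infinite_isFree v) _

theorem strictMonoOn_extWord (v : Fin m → ℕ) : StrictMonoOn (extWord v) (Set.Ici m) := by
  intro i hi j hj hij
  simp only [Set.mem_Ici] at hi hj
  rw [extWord_of_le v hi, extWord_of_le v hj, nth_lt_nth (infinite_isFree v)]
  grind

theorem extWord_injective {v : Fin m → ℕ} (hv : Injective v) : Injective (extWord v) := by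
  intro i j hij
  rcases lt_or_ge i m with hi | hi <;> rcases lt_or_ge j m with hj | hj
  · exact Fin.mk.inj_iff.1 (hv (by simpa [extWord, hi, hj] using hij))
  · exact absurd ((extWord_of_lt v ⟨i, hi⟩).symm.trans hij) ((isFree_extWord v hj).2 ⟨i, hi⟩)
  · exact absurd ((extWord_of_lt v ⟨j, hj⟩).symm.trans hij.symm) ((isFree_extWord v hi).2 ⟨j, hj⟩)
  · rw [extWord_of_le v hi, extWord_of_le v hj] at hij
    have := nth_injective (infinite_isFree v) hij
    omega

theorem IsArrangement.le (hv : IsArrangement N v) : m ≤ N := by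
  simpa using card_le_card_of_injOn (s := univ) v (fun i _ => hv.mem_Icc i) hv.injective.injOn

theorem IsArrangement.extWord_mem_Icc (hv : IsArrangement N v) {i : ℕ} (hi : i < N) :
    extWord v i ∈ Icc 1 N := by
  rcases lt_or_ge i m with him | him
  · exact extWord_of_lt v ⟨i, him⟩ ▸ hv.mem_Icc ⟨i, him⟩
  · have hlt : i - m < count (IsFree v) (N + 1) := by rw [hv.count_isFree]; omega
    rw [lt_nth_iff_count_lt (infinite_isFree v), ← extWord_of_le v him] at hlt
    have := (isFree_extWord v him).1
    simp only [Finset.mem_Icc]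
    omega

open Classical in
noncomputable def sortedExt (N : ℕ) (v : Fin m → ℕ) : Equiv.Perm (Fin N) :=
  if hv : IsArrangement N v then
    Equiv.ofBijective
      (fun i => ⟨extWord v i - 1, by have := hv.extWord_mem_Icc i.isLt; simp at this; omega⟩)
      (Finite.injective_iff_bijective.1 fun i j hij => by
        have := hv.extWord_mem_Icc i.isLt
        have := hv.extWord_mem_Icc j.isLt
        simp only [mem_Icc, Fin.mk.injEq] at *
        exact Fin.ext (extWord_injective hv.injective (by omega)))
  else 1

theorem IsArrangement.entry_sortedExt (hv : IsArrangement N v) {i : ℕ} (hi : i < N) :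
    entry (sortedExt N v) (i + 1) = extWord v i := by
  have := hv.extWord_mem_Icc hi
  simp only [Finset.mem_Icc] at this
  rw [entry_of_lt _ hi, sortedExt, dif_pos hv, Equiv.ofBijective_apply]
  show extWord v i - 1 + 1 = extWord v i
  omega

def prefixOf (m : ℕ) (π : Equiv.Perm (Fin N)) : Fin m → ℕ := fun i => entry π (i + 1)

theorem IsArrangement.prefixOf_sortedExt (hv : IsArrangement N v) :
    prefixOf m (sortedExt N v) = v := by
  funext i
  rw [prefixOf, hv.entry_sortedExt (by have := hv.le; omega), extWord_of_lt]

theorem isArrangement_prefixOf (hmN : m ≤ N) (π : Equiv.Perm (Fin N)) :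
    IsArrangement N (prefixOf m π) where
  injective i j hij := Fin.ext (by
    have := entry_injOn π (by simp; omega) (by simp; omega) hij
    omega)
  mem_Icc i := entry_mem_Icc π (by simp; omega)

theorem nth_eq_of_strictMono {p : ℕ → Prop} (hp : (Set.ofPred p).Infinite) {f : ℕ → ℕ}
    (hf : StrictMono f) (hmaps : ∀ t, p (f t)) (hsurj : ∀ y, p y → ∃ t, f t = y) (t : ℕ) :
    nth p t = f t := by
  have hU : {n | ∀ hf : (Set.ofPred p).Finite, n < #hf.toFinset} = Set.univ :=
    Set.eq_univ_of_forall fun n hf => absurd hf hp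
  refine (eq_nth_of_strictMonoOn_of_mapsTo_of_surjOn f ?_ ?_ ?_ (hU ▸ trivial : t ∈ _)).symm
  · rw [hU]
    exact fun y hy => (hsurj y hy).imp fun s hs => ⟨trivial, hs⟩
  · exact fun s _ => hmaps s
  · exact hf.strictMonoOn _

/-- Extended by `t ↦ m + 1 + t` beyond `N`, the letters after position `m` of a word increasing
there enumerate all free values. -/
theorem entry_eq_nth_of_strictMonoOn {π : Equiv.Perm (Fin N)}
    (hmono : StrictMonoOn (entry π) (Set.Icc (m + 1) N)) {t : ℕ} (ht : m + 1 + t ≤ N) :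
    entry π (m + 1 + t) = nth (IsFree (prefixOf m π)) t := by
  set v := prefixOf m π
  let f : ℕ → ℕ := fun t => if m + 1 + t ≤ N then entry π (m + 1 + t) else m + 1 + t
  have hentry : ∀ b, 1 ≤ b → b ≤ N → 1 ≤ entry π b ∧ entry π b ≤ N := fun b h1 h2 => by
    simpa using entry_mem_Icc π (b := b) (by simp [h1, h2])
  have hf : StrictMono f := by
    intro s s' hss'
    by_cases hs' : m + 1 + s' ≤ N
    · have := hmono (a := m + 1 + s) (b := m + 1 + s') (by simp; omega) (by simp; omega)
        (by omega)
      simpa [f, hs', show m + 1 + s ≤ N by omega] using this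
    · by_cases hs : m + 1 + s ≤ N
      · simpa [f, hs, hs'] using (hentry _ (by omega) hs).2.trans_lt (by omega)
      · simpa [f, hs, hs'] using hss'
  have hmaps : ∀ s, IsFree v (f s) := by
    intro s
    by_cases hs : m + 1 + s ≤ N
    · simp only [f, hs, if_true]
      refine ⟨by grind, fun i hi => ?_⟩
      have := entry_injOn π (by simp; omega) (by simp; omega) hi
      omega
    · simp only [f, hs, if_false]
      refine ⟨by omega, fun i => ?_⟩
      have : v i ∈ Icc 1 N := (isArrangement_prefixOf (by omega) π).mem_Icc i
      simp only [Finset.mem_Icc] at this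
      omega
  have hsurj : ∀ y, IsFree v y → ∃ s, f s = y := by
    rintro y ⟨hy0, hyv⟩
    by_cases hyN : y ≤ N
    · obtain ⟨b, hb, rfl⟩ := exists_entry_eq π (y := y) (by simp; omega)
      simp only [Finset.mem_Icc] at hb
      have hmb : m < b := by
        by_contra!
        exact hyv ⟨b - 1, by omega⟩ (by simp only [v, prefixOf]; congr 1; omega)
      exact ⟨b - (m + 1), by simp only [f]; rw [if_pos (by omega)]; congr 1; omega⟩
    · exact ⟨y - (m + 1), by simp only [f]; rw [if_neg (by omega)]; omega⟩
  simpa [f, ht] using (nth_eq_of_strictMono (infinite_isFree v) hf hmaps hsurj t).symm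

theorem sortedExt_prefixOf (hmN : m ≤ N) {π : Equiv.Perm (Fin N)}
    (hmono : StrictMonoOn (entry π) (Set.Icc (m + 1) N)) : sortedExt N (prefixOf m π) = π := by
  refine ext_of_entry _ fun b hb => ?_
  simp only [Finset.mem_Icc] at hb
  obtain ⟨i, rfl⟩ : ∃ i, b = i + 1 := ⟨b - 1, by omega⟩
  rw [(isArrangement_prefixOf hmN π).entry_sortedExt (by omega)]
  rcases lt_or_ge i m with him | him
  · exact extWord_of_lt _ ⟨i, him⟩
  · rw [extWord_of_le _ him, ← entry_eq_nth_of_strictMonoOn hmono (by omega)]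
    congr 1
    omega

end SortedExtension

section Invariance

variable {m : ℕ} {v v' : Fin m → ℕ} {H : ℕ}

theorem extWord_lt_iff_lt_count (i : Fin m) {j : ℕ} (hmj : m ≤ j) :
    extWord v j < v i ↔ j - m < count (IsFree v) (v i) := by
  rw [extWord_of_le v hmj, lt_nth_iff_count_lt (infinite_isFree v)]

theorem count_isFree_congr (hagree : ∀ i, v i < H ∨ v' i < H → v i = v' i) {x : ℕ}
    (hx : x ≤ H) : count (IsFree v) x = count (IsFree v') x := by
  simp only [count_eq_card_filter_range]
  refine congrArg card (filter_congr fun y hy => and_congr_right fun _ => forall_congr' fun i => ?_)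
  simp only [mem_range] at hy
  constructor <;> intro hne heq <;> exact hne (by grind)

/-- Below a value `x ≥ H` of `v`, at most `m - 1` of the numbers `1, …, H - 1` are taken. -/
theorem sub_le_count_isFree (i : Fin m) (hH : H ≤ v i) :
    H - m ≤ count (IsFree v) (v i) := by
  have hsub : range H \ insert 0 ((univ.erase i).image v) ⊆ {y ∈ range H | IsFree v y} := by
    intro y hy
    simp only [mem_sdiff, mem_range, mem_insert, mem_image, mem_erase, mem_univ, and_true,
      not_or, not_exists, not_and] at hy
    simp only [mem_filter, mem_range]
    refine ⟨hy.1, hy.2.1, fun k hk => ?_⟩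
    by_cases hki : k = i
    · subst hki; omega
    · exact hy.2.2 k hki hk
  have hcard : #(insert 0 ((univ.erase i).image v)) ≤ m := by
    have := Finset.card_image_le (s := univ.erase i) (f := v)
    rw [card_erase_of_mem (mem_univ i), Finset.card_univ, Fintype.card_fin] at this
    have := card_insert_le 0 ((univ.erase i).image v)
    have := i.isLt
    omega
  calc H - m ≤ #(range H) - #(insert 0 ((univ.erase i).image v)) := by
        rw [card_range]; omega
    _ ≤ #(range H \ insert 0 ((univ.erase i).image v)) := le_card_sdiff _ _
    _ ≤ count (IsFree v) H := (card_le_card hsub).trans_eq (count_eq_card_filter_range _ _).symm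
    _ ≤ count (IsFree v) (v i) := count_monotone _ hH

theorem extWord_lt_extWord_iff_of_agree (hagree : ∀ i, v i < H ∨ v' i < H → v i = v' i)
    (horder : ∀ i j, v i < v j ↔ v' i < v' j) (i : Fin m) {j : ℕ} (hjH : j < H) :
    extWord v j < extWord v i ↔ extWord v' j < extWord v' i := by
  rw [extWord_of_lt, extWord_of_lt]
  rcases lt_or_ge j m with hjm | hjm
  · exact extWord_of_lt v ⟨j, hjm⟩ ▸ extWord_of_lt v' ⟨j, hjm⟩ ▸ horder ⟨j, hjm⟩ i
  rw [extWord_lt_iff_lt_count i hjm, extWord_lt_iff_lt_count i hjm]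
  by_cases hvi : v i < H
  · rw [← hagree i (.inl hvi), count_isFree_congr hagree hvi.le]
  · have hvi' : H ≤ v' i := by grind
    have := sub_le_count_isFree i (not_lt.1 hvi)
    have := sub_le_count_isFree i hvi'
    omega

variable {N : ℕ} {h : ℕ → ℕ}

theorem IsArrangement.mem_invh_sortedExt (hv : IsArrangement N v) {a b : ℕ} :
    (a, b) ∈ invh h (sortedExt N v) ↔
      1 ≤ a ∧ a ≤ m ∧ a < b ∧ b ≤ N ∧ b ≤ h a ∧ extWord v (b - 1) < extWord v (a - 1) := by
  rw [mem_invh]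
  constructor
  · rintro ⟨ha, hab, hbN, hbh, hlt⟩
    rw [show b = (b - 1) + 1 by omega, show a = (a - 1) + 1 by omega,
      hv.entry_sortedExt (by omega), hv.entry_sortedExt (by omega)] at hlt
    refine ⟨ha, ?_, hab, hbN, hbh, by simpa using hlt⟩
    by_contra! ham
    exact (strictMonoOn_extWord v (a := a - 1) (b := b - 1) (by simp; omega) (by simp; omega)
      (by omega)).not_gt (by simpa using hlt)
  · rintro ⟨ha, -, hab, hbN, hbh, hlt⟩
    refine ⟨ha, hab, hbN, hbh, ?_⟩
    rwa [show b = (b - 1) + 1 by omega, show a = (a - 1) + 1 by omega,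
      hv.entry_sortedExt (by omega), hv.entry_sortedExt (by omega)]

/-- Only positions `≤ H` are compared with the first `m` letters, and a letter `≥ H` exceeds
every free value placed there. -/
theorem invh_sortedExt_eq_of_agree {N' : ℕ} (hv : IsArrangement N v) (hv' : IsArrangement N' v')
    (hHN : H ≤ N) (hHN' : H ≤ N') (hh : ∀ a, 1 ≤ a → a ≤ m → h a ≤ H)
    (hagree : ∀ i, v i < H ∨ v' i < H → v i = v' i) (horder : ∀ i j, v i < v j ↔ v' i < v' j) :
    invh h (sortedExt N v) = invh h (sortedExt N' v') := by
  ext ⟨a, b⟩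
  rw [hv.mem_invh_sortedExt, hv'.mem_invh_sortedExt]
  refine and_congr_right fun ha => and_congr_right fun ham => and_congr_right fun hab => ?_
  have hbH : b ≤ h a → b ≤ H := fun hb => hb.trans (hh a ha ham)
  have key := extWord_lt_extWord_iff_of_agree hagree horder ⟨a - 1, by omega⟩ (j := b - 1)
  constructor
  · rintro ⟨-, hbh, hlt⟩
    exact ⟨(hbH hbh).trans hHN', hbh, (key (by grind)).1 hlt⟩
  · rintro ⟨-, hbh, hlt⟩
    exact ⟨(hbH hbh).trans hHN, hbh, (key (by grind)).2 hlt⟩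

end Invariance

section Relabel

variable {B B' : Finset ℕ} (e : B ≃o B') {H : ℕ}

def relabel (x : ℕ) : ℕ := if hx : x ∈ B then e ⟨x, hx⟩ else x

variable {e}

theorem relabel_of_mem {x : ℕ} (hx : x ∈ B) : relabel e x = e ⟨x, hx⟩ := dif_pos hx

theorem relabel_of_notMem {x : ℕ} (hx : x ∉ B) : relabel e x = x := dif_neg hx

theorem relabel_mem {x : ℕ} (hx : x ∈ B) : relabel e x ∈ B' :=
  relabel_of_mem hx ▸ (e ⟨x, hx⟩).2

theorem relabel_symm_relabel {x : ℕ} (hx : x ∈ B ∨ x ∉ B') : relabel e.symm (relabel e x) = x := by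
  by_cases hxB : x ∈ B
  · rw [relabel_of_mem hxB, relabel_of_mem (e ⟨x, hxB⟩).2]
    simp
  · rw [relabel_of_notMem hxB, relabel_of_notMem (hx.resolve_left hxB)]

theorem relabel_strictMonoOn (hB : ∀ x ∈ B, H ≤ x) (hB' : ∀ x ∈ B', H ≤ x) :
    StrictMonoOn (relabel e) (Set.Iio H ∪ B) := by
  rintro x (hx | hx) y (hy | hy) hxy
  · rwa [relabel_of_notMem fun h => (hB x h).not_gt hx,
      relabel_of_notMem fun h => (hB y h).not_gt hy]
  · rw [relabel_of_notMem fun h => (hB x h).not_gt hx]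
    exact lt_of_lt_of_le hx (hB' _ (relabel_mem hy))
  · exact absurd (hxy.trans hy) (hB x hx).not_gt
  · rw [relabel_of_mem hx, relabel_of_mem hy]
    exact e.strictMono (Subtype.mk_lt_mk.2 hxy)

end Relabel

section Fiber

variable {m H N N' : ℕ} {B B' : Finset ℕ}

/-- `{π_1, …, π_m} ∩ [H, N]`. -/
def largeValues (m H : ℕ) (π : Equiv.Perm (Fin N)) : Finset ℕ :=
  (Icc 1 m).image (entry π) ∩ Icc H N

theorem image_entry_Icc (π : Equiv.Perm (Fin N)) :
    (Icc 1 m).image (entry π) = univ.image (prefixOf m π) := by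
  ext y
  simp only [mem_image, Finset.mem_Icc, mem_univ, true_and, prefixOf]
  constructor
  · rintro ⟨a, ha, rfl⟩
    exact ⟨⟨a - 1, by omega⟩, by congr 1; simp; omega⟩
  · rintro ⟨i, rfl⟩
    exact ⟨i + 1, by omega, rfl⟩

theorem largeValues_subset (π : Equiv.Perm (Fin N)) : largeValues m H π ⊆ Icc H N :=
  inter_subset_right

theorem le_of_mem_largeValues {π : Equiv.Perm (Fin N)} {x : ℕ} (hx : x ∈ largeValues m H π) :
    H ≤ x :=
  (Finset.mem_Icc.1 (largeValues_subset π hx)).1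

theorem card_largeValues_le (π : Equiv.Perm (Fin N)) : #(largeValues m H π) ≤ m :=
  (card_le_card inter_subset_left).trans (card_image_le.trans (by simp))

theorem prefixOf_mem_or_lt (hmN : m ≤ N) {π : Equiv.Perm (Fin N)} (hπ : largeValues m H π = B)
    (i : Fin m) : prefixOf m π i ∈ B ∨ prefixOf m π i < H := by
  refine or_iff_not_imp_right.2 fun hiH => hπ ▸ mem_inter.2 ⟨?_, ?_⟩
  · rw [image_entry_Icc]
    exact mem_image_of_mem _ (mem_univ i)
  · have := (isArrangement_prefixOf hmN π).mem_Icc i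
    simp only [Finset.mem_Icc] at this ⊢
    omega

variable {e : B ≃o B'} {v : Fin m → ℕ}

theorem IsArrangement.relabel_comp (hv : IsArrangement N v) (hvB : ∀ i, v i ∈ B ∨ v i < H)
    (hB : ∀ x ∈ B, H ≤ x) (hB' : B' ⊆ Icc H N') (hH : 1 ≤ H) (hHN' : H ≤ N') :
    IsArrangement N' (relabel e ∘ v) where
  injective i j hij := hv.injective <|
    (relabel_strictMonoOn hB fun x hx => (Finset.mem_Icc.1 (hB' hx)).1).injOn
      ((hvB i).symm) ((hvB j).symm) hij
  mem_Icc i := by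
    rcases hvB i with hi | hi
    · have := Finset.mem_Icc.1 (hB' (relabel_mem (e := e) hi))
      simp only [comp_apply, Finset.mem_Icc]
      omega
    · have := hv.mem_Icc i
      simp only [Finset.mem_Icc] at this
      simp only [comp_apply, relabel_of_notMem fun h => (hB _ h).not_gt hi, Finset.mem_Icc]
      omega

theorem image_relabel_comp_inter (hvB : ∀ i, v i ∈ B ∨ v i < H) (hBv : B ⊆ univ.image v)
    (hB' : B' ⊆ Icc H N') : univ.image (relabel e ∘ v) ∩ Icc H N' = B' := by
  ext y
  simp only [mem_inter, mem_image, mem_univ, true_and, comp_apply]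
  constructor
  · rintro ⟨⟨i, rfl⟩, hiH⟩
    by_cases hiB : v i ∈ B
    · exact relabel_mem hiB
    · rw [relabel_of_notMem hiB, Finset.mem_Icc] at hiH
      have := (hvB i).resolve_left hiB
      omega
  · intro hy
    obtain ⟨i, -, hi⟩ := mem_image.1 (hBv (e.symm ⟨y, hy⟩).2)
    refine ⟨⟨i, ?_⟩, hB' hy⟩
    rw [hi, relabel_of_mem (e.symm ⟨y, hy⟩).2]
    simp

variable {h : ℕ → ℕ} {S : Finset (ℕ × ℕ)}

def fiber (h : ℕ → ℕ) (S : Finset (ℕ × ℕ)) (H N : ℕ) (B : Finset ℕ) :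
    Finset (Equiv.Perm (Fin N)) :=
  (Ih h S N).filter fun π => largeValues (mS S) H π = B

noncomputable def transport (m : ℕ) (e : B ≃o B') (N' : ℕ) (π : Equiv.Perm (Fin N)) :
    Equiv.Perm (Fin N') :=
  sortedExt N' (relabel e ∘ prefixOf m π)

theorem transport_mem_fiber (hgt : ∀ i : ℕ, 0 < i → i < h i)
    (hh : ∀ a, 1 ≤ a → a ≤ mS S → h a ≤ H) (hmH : mS S < H) (hHN : H ≤ N) (hHN' : H ≤ N')
    (hB' : B' ⊆ Icc H N') {π : Equiv.Perm (Fin N)} (hπ : π ∈ fiber h S H N B) :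
    transport (mS S) e N' π ∈ fiber h S H N' B' := by
  obtain ⟨hπS, hπB⟩ := mem_filter.1 hπ
  set v := prefixOf (mS S) π
  have hv : IsArrangement N v := isArrangement_prefixOf (by omega) π
  have hvB : ∀ i, v i ∈ B ∨ v i < H := prefixOf_mem_or_lt (by omega) hπB
  have hB : ∀ x ∈ B, H ≤ x := fun x hx => le_of_mem_largeValues (hπB ▸ hx)
  have hBH' : ∀ x ∈ B', H ≤ x := fun x hx => (Finset.mem_Icc.1 (hB' hx)).1
  have hv' := hv.relabel_comp (e := e) hvB hB hB' (by omega) hHN'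
  have hagree : ∀ i, v i < H ∨ relabel e (v i) < H → v i = relabel e (v i) := by
    intro i hi
    rcases hvB i with hiB | hiH
    · exact absurd hi (not_or.2 ⟨(hB _ hiB).not_gt, (hBH' _ (relabel_mem hiB)).not_gt⟩)
    · exact (relabel_of_notMem fun h => (hB _ h).not_gt hiH).symm
  have horder : ∀ i j, v i < v j ↔ relabel e (v i) < relabel e (v j) := fun i j =>
    ((relabel_strictMonoOn hB hBH').lt_iff_lt (hvB i).symm (hvB j).symm).symm
  refine mem_filter.2 ⟨mem_filter.2 ⟨mem_univ _, ?_⟩, ?_⟩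
  · rw [transport, ← invh_sortedExt_eq_of_agree hv hv' hHN hHN' hh hagree horder,
      sortedExt_prefixOf (by omega) (strictMonoOn_entry_of_mem_Ih hgt hπS), (mem_filter.1 hπS).2]
  · rw [transport, largeValues, image_entry_Icc, hv'.prefixOf_sortedExt]
    refine image_relabel_comp_inter hvB ?_ hB'
    rw [← hπB, largeValues, image_entry_Icc]
    exact inter_subset_left

theorem transport_symm_transport (hgt : ∀ i : ℕ, 0 < i → i < h i) (hmH : mS S < H)
    (hHN : H ≤ N) (hHN' : H ≤ N') (hB' : B' ⊆ Icc H N') {π : Equiv.Perm (Fin N)}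
    (hπ : π ∈ fiber h S H N B) : transport (mS S) e.symm N (transport (mS S) e N' π) = π := by
  obtain ⟨hπS, hπB⟩ := mem_filter.1 hπ
  have hv := isArrangement_prefixOf (m := mS S) (by omega) π
  have hvB := prefixOf_mem_or_lt (by omega) hπB
  have hB : ∀ x ∈ B, H ≤ x := fun x hx => le_of_mem_largeValues (hπB ▸ hx)
  have hv' := hv.relabel_comp (e := e) hvB hB hB' (by omega) hHN'
  have hinv : relabel e.symm ∘ (relabel e ∘ prefixOf (mS S) π) = prefixOf (mS S) π :=
    funext fun i => relabel_symm_relabel <| (hvB i).imp_right fun hi hiB' =>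
      (Finset.mem_Icc.1 (hB' hiB')).1.not_gt hi
  rw [transport, transport, hv'.prefixOf_sortedExt, hinv,
    sortedExt_prefixOf (by omega) (strictMonoOn_entry_of_mem_Ih hgt hπS)]

theorem card_fiber_eq (hgt : ∀ i : ℕ, 0 < i → i < h i) (hh : ∀ a, 1 ≤ a → a ≤ mS S → h a ≤ H)
    (hmH : mS S < H) (hHN : H ≤ N) (hHN' : H ≤ N') (hB : B ⊆ Icc H N) (hB' : B' ⊆ Icc H N')
    (e : B ≃o B') : #(fiber h S H N B) = #(fiber h S H N' B') :=
  card_nbij' (transport (mS S) e N') (transport (mS S) e.symm N)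
    (fun _ hπ => transport_mem_fiber hgt hh hmH hHN hHN' hB' hπ)
    (fun _ hπ => transport_mem_fiber hgt hh hmH hHN' hHN hB hπ)
    (fun _ hπ => transport_symm_transport hgt hmH hHN hHN' hB' hπ)
    (fun _ hπ => by simpa using transport_symm_transport (e := e.symm) hgt hmH hHN' hHN hB hπ)

theorem card_fiber_eq_zero (hB : mS S < #B) : #(fiber h S H N B) = 0 :=
  card_eq_zero.2 <| filter_eq_empty_iff.2 fun π _ hπ =>
    (hπ ▸ card_largeValues_le (m := mS S) (H := H) π).not_gt hB

end Fiber

section Counting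

variable {h : ℕ → ℕ} {S : Finset (ℕ × ℕ)}

theorem aCoeff_eq_card_fiber (k : ℕ) :
    aCoeff h S k = #(fiber h S (h (mS S)) (mS S + h (mS S) - 1)
      (Icc (h (mS S)) (h (mS S) + k - 1))) := rfl

theorem aCoeff_eq_zero {k : ℕ} (hk : mS S < k) : aCoeff h S k = 0 := by
  rw [aCoeff_eq_card_fiber]
  exact card_fiber_eq_zero (by rw [Nat.card_Icc]; omega)

theorem card_fiber_eq_aCoeff (hgt : ∀ i : ℕ, 0 < i → i < h i)
    (hh : ∀ a, 1 ≤ a → a ≤ mS S → h a ≤ h (mS S)) (hm : 1 ≤ mS S) {n : ℕ}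
    (hn : mS S + h (mS S) - 1 ≤ n) {B : Finset ℕ} (hB : B ⊆ Icc (h (mS S)) n) :
    #(fiber h S (h (mS S)) n B) = aCoeff h S #B := by
  have hmH := hgt _ hm
  by_cases hBm : #B ≤ mS S
  · have hcard : #(Icc (h (mS S)) (h (mS S) + #B - 1)) = #B := by rw [Nat.card_Icc]; omega
    rw [aCoeff_eq_card_fiber]
    exact card_fiber_eq hgt hh hmH (by omega) (by omega) hB
      (Icc_subset_Icc_right (by omega))
      ((B.orderIsoOfFin rfl).symm.trans (Finset.orderIsoOfFin _ hcard))
  · rw [card_fiber_eq_zero (by omega), aCoeff_eq_zero (by omega)]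

end Counting

end HInversion

open HInversion

/-- For `n ≥ m + h(m) − 1`, `𝓘_h(S;n) = Σ_{k=0}^{m} a_k(S) · C(n − h(m) + 1, k)`. -/
theorem stmt8 (h : ℕ → ℕ) (hmono : ∀ ⦃i j : ℕ⦄, 0 < i → i ≤ j → h i ≤ h j)
    (hgt : ∀ i : ℕ, 0 < i → i < h i) (S : Finset (ℕ × ℕ)) (hSne : S.Nonempty)
    (hadm : Admissible h S) (n : ℕ) (hn : mS S + h (mS S) - 1 ≤ n) :
    Icount h S n =
      ∑ k ∈ Finset.range (mS S + 1), aCoeff h S k * Nat.choose (n - h (mS S) + 1) k := by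
  obtain ⟨N, π, hπ⟩ := hadm
  have hm := one_le_mS hgt hSne hπ
  have hfibers : Icount h S n = ∑ B ∈ (Icc (h (mS S)) n).powerset, aCoeff h S #B := by
    rw [Icount, card_eq_sum_card_fiberwise fun π _ => mem_powerset.2 (largeValues_subset π)]
    exact sum_congr rfl fun B hB => card_fiber_eq_aCoeff hgt (fun a ha ham => hmono ha ham) hm
      hn (mem_powerset.1 hB)
  rw [hfibers, sum_powerset_apply_card, Nat.card_Icc, show n + 1 - h (mS S) = n - h (mS S) + 1 by
    omega]
  refine (sum_subset (range_subset_range.2 (by omega)) fun k _ hk => ?_).symm.trans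
    (sum_congr rfl fun k _ => by rw [smul_eq_mul, mul_comm])
  rw [aCoeff_eq_zero (by simpa using hk), smul_zero]
end

section
/- Let P be a finite partially ordered set with n elements and let v ∈ P. For 0 ≤ k ≤ n−1, let h_k(P,v) denote the number of linear extensions of P in which exactly k elements of P precede v. Then the sequence (h_k(P,v))_{k=0}^{n−1} has no internal zeros: if 0 ≤ i < j < k ≤ n−1 and h_i(P,v) ≠ 0 and h_k(P,v) ≠ 0, then h_j(P,v) ≠ 0. -/
/-- `h_k(P,v)`: the number of linear extensions of the finite poset `P` in which exactly
`k` elements precede `v`, i.e. bijections `φ : P ≃ Fin (#P)` with `x < y → φ x < φ y`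
and `φ v = k` (0-based, so `k` elements come before `v`). -/
noncomputable def heightSeq (P : Type*) [Fintype P] [PartialOrder P] (v : P) (k : ℕ) : ℕ :=
  Nat.card {φ : P ≃ Fin (Fintype.card P) //
    (∀ x y : P, x < y → φ x < φ y) ∧ (φ v : ℕ) = k}

/-!
A linear extension with `k` elements before `v` is the same thing as a lower set of size `k`
that contains everything below `v` but not `v`: the elements preceding `v` form such a set, and
conversely one lists the lower set, then `v`, then the rest. Between two nested lower sets there
are lower sets of every intermediate size (peel off maximal elements of the difference), so the
admissible `k` form an interval, running from `#{x | x < v}` upwards.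
-/

open Finset

theorem Prop.lt_iff {p q : Prop} : p < q ↔ ¬p ∧ q := by
  simp only [lt_iff_le_not_ge, le_Prop_eq]
  tauto

theorem IsLowerSet.monotone_notMem {α : Type*} [Preorder α] {s : Set α} (hs : IsLowerSet s) :
    Monotone (· ∉ s) :=
  fun _ _ hxy hx hy => hx (hs hxy hy)

theorem Finset.exists_isLowerSet_subset_card_eq {α : Type*} [PartialOrder α] {s t : Finset α}
    (hs : IsLowerSet (s : Set α)) (ht : IsLowerSet (t : Set α)) (hst : s ⊆ t) {n : ℕ}
    (hsn : #s ≤ n) (hnt : n ≤ #t) :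
    ∃ u : Finset α, IsLowerSet (u : Set α) ∧ s ⊆ u ∧ u ⊆ t ∧ #u = n := by
  classical
  induction t using Finset.strongInduction with
  | H t ih =>
  obtain hnt | hnt := hnt.eq_or_lt
  · exact ⟨t, ht, hst, subset_rfl, hnt.symm⟩
  obtain ⟨m, hm⟩ := (t \ s).exists_maximal
    (sdiff_nonempty.2 fun h => (hsn.trans_lt hnt).not_ge (card_le_card h))
  obtain ⟨hmt, hms⟩ := mem_sdiff.1 hm.prop
  have hmax : ∀ b ∈ (t : Set α), m ≤ b → b = m := fun b hb hmb =>
    (hm.eq_of_le (mem_sdiff.2 ⟨hb, fun hbs => hms (hs hmb hbs)⟩) hmb).symm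
  obtain ⟨u, hu, hsu, hut, rfl⟩ := ih (t.erase m) (erase_ssubset hmt)
    (by simpa using ht.erase hmax) (subset_erase.2 ⟨hst, hms⟩)
    (by rw [card_erase_of_mem hmt]; omega)
  exact ⟨u, hu, hsu, hut.trans (erase_subset _ _), rfl⟩

section Fintype

variable {P : Type*} [Fintype P]

theorem Equiv.card_filter_apply_lt_apply (φ : P ≃ Fin (Fintype.card P)) (v : P) :
    #{x | φ x < φ v} = φ v := by
  rw [← Fin.card_Iio, ← card_map φ.symm.toEmbedding]
  congr 1
  ext x
  simp

theorem exists_equiv_fin_lt_iff_of_injective {α : Type*} [LinearOrder α] {f : P → α}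
    (hf : f.Injective) : ∃ φ : P ≃ Fin (Fintype.card P), ∀ x y, φ x < φ y ↔ f x < f y :=
  ⟨(Equiv.ofInjective f hf).trans
    (Fintype.orderIsoFinOfCardEq (Set.range f) (Set.card_range_of_injective hf)).symm.toEquiv,
   fun _ _ => OrderIso.lt_iff_lt _⟩

variable [PartialOrder P]

theorem heightSeq_ne_zero_iff {v : P} {k : ℕ} : heightSeq P v k ≠ 0 ↔
    ∃ φ : P ≃ Fin (Fintype.card P), (∀ x y : P, x < y → φ x < φ y) ∧ (φ v : ℕ) = k := by
  simp only [heightSeq, ne_eq, Nat.card_eq_zero, not_or, not_isEmpty_iff,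
    not_infinite_iff_finite, nonempty_subtype]
  exact and_iff_left inferInstance

theorem exists_linearExtension_apply_eq_card {v : P} {s : Finset P}
    (hs : IsLowerSet (s : Set P)) (hvs : ∀ x < v, x ∈ s) (hv : v ∉ s) :
    ∃ φ : P ≃ Fin (Fintype.card P), (∀ x y : P, x < y → φ x < φ y) ∧ (φ v : ℕ) = #s := by
  classical
  have hs_insert : IsLowerSet ((insert v s : Finset P) : Set P) := by
    rw [coe_insert]
    rintro x y hyx (rfl | hx)
    · exact hyx.eq_or_lt.imp id (hvs y)
    · exact Or.inr (hs hyx hx)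
  -- first `s`, then `v`, then the rest, each block ordered by a fixed linear extension
  let key : P → Prop ×ₗ Prop ×ₗ LinearExtension P :=
    fun x => toLex (x ∉ s, toLex (x ∉ insert v s, toLinearExtension x))
  have hkey_inj : key.Injective := fun x y h => congrArg (fun p => (ofLex (ofLex p).2).2) h
  have hkey_mono : Monotone key :=
    Prod.Lex.toLex_mono.comp (hs.monotone_notMem.prodMk (Prod.Lex.toLex_mono.comp
      (hs_insert.monotone_notMem.prodMk toLinearExtension.monotone)))
  have hkey_v : ∀ x, key x < key v ↔ x ∈ s := by
    intro x
    obtain rfl | hxv := eq_or_ne x v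
    · simp [hv]
    · by_cases hx : x ∈ s <;> simp [key, Prod.Lex.toLex_lt_toLex, Prop.lt_iff, hv, hx, hxv]
  obtain ⟨φ, hφ⟩ := exists_equiv_fin_lt_iff_of_injective hkey_inj
  refine ⟨φ, fun x y h => (hφ x y).2 (hkey_mono.strictMono_of_injective hkey_inj h), ?_⟩
  rw [← φ.card_filter_apply_lt_apply v]
  congr 1
  ext x
  simp [hφ, hkey_v]

theorem heightSeq_ne_zero_iff_exists_isLowerSet {v : P} {k : ℕ} : heightSeq P v k ≠ 0 ↔
    ∃ s : Finset P, IsLowerSet (s : Set P) ∧ (∀ x < v, x ∈ s) ∧ v ∉ s ∧ #s = k := by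
  rw [heightSeq_ne_zero_iff]
  constructor
  · rintro ⟨φ, hφ, rfl⟩
    have hφ_mono : Monotone φ := StrictMono.monotone fun x y h => hφ x y h
    refine ⟨({x | φ x < φ v} : Finset P), fun x y hyx hx => ?_,
      fun x hx => by simpa using hφ _ _ hx, by simp, φ.card_filter_apply_lt_apply v⟩
    simp only [coe_filter, mem_univ, true_and, Set.mem_ofPred_eq] at hx ⊢
    exact (hφ_mono hyx).trans_lt hx
  · rintro ⟨s, hs, hvs, hv, rfl⟩
    exact exists_linearExtension_apply_eq_card hs hvs hv

end Fintype

theorem stmt10_general (P : Type*) [Fintype P] [PartialOrder P] (v : P)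
    (i j k : ℕ) (hij : i < j) (hjk : j < k)
    (hi0 : heightSeq P v i ≠ 0) (hk0 : heightSeq P v k ≠ 0) :
    heightSeq P v j ≠ 0 := by
  classical
  obtain ⟨s, -, hvs, -, rfl⟩ := heightSeq_ne_zero_iff_exists_isLowerSet.1 hi0
  obtain ⟨t, ht, hvt, hv, rfl⟩ := heightSeq_ne_zero_iff_exists_isLowerSet.1 hk0
  have hbelow : IsLowerSet (({x | x < v} : Finset P) : Set P) := by
    simp only [coe_filter, mem_univ, true_and]
    exact isLowerSet_Iio v
  obtain ⟨u, hu, hbu, hut, rfl⟩ := exists_isLowerSet_subset_card_eq hbelow ht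
    (fun x hx => hvt x (by simpa using hx))
    ((card_le_card fun x hx => hvs x (by simpa using hx)).trans hij.le) hjk.le
  exact heightSeq_ne_zero_iff_exists_isLowerSet.2
    ⟨u, hu, fun x hx => hbu (by simpa using hx), fun h => hv (hut h), rfl⟩

/-- The height sequence `(h_k(P,v))_{k=0}^{n−1}` has no internal zeros. -/
theorem stmt10 (P : Type*) [Fintype P] [PartialOrder P] (v : P)
    (i j k : ℕ) (hij : i < j) (hjk : j < k) (hk : k ≤ Fintype.card P - 1)
    (hi0 : heightSeq P v i ≠ 0) (hk0 : heightSeq P v k ≠ 0) :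
    heightSeq P v j ≠ 0 :=
  stmt10_general P v i j k hij hjk hi0 hk0
end

section
/- Let S be a nonempty h-admissible set and m := m(S). Then 𝓘_h(S;n) = 𝓘_h(S; j(S)) for all n ≥ j(S) if and only if there is no i ≤ m such that both: (1) (i,j) ∈ S for all j with i < j ≤ h(i), and (2) (k,i) ∉ S for all k with k < i ≤ h(k). -/
open Finset

-- ===== auxiliary lemmas =====

lemma mem_invh {h : ℕ → ℕ} {n : ℕ} {π : Equiv.Perm (Fin n)} {a b : ℕ} :
    (a, b) ∈ invh h π ↔ ∃ p q : Fin n,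
      ((p : ℕ) < (q : ℕ) ∧ (q : ℕ) + 1 ≤ h ((p : ℕ) + 1) ∧ π q < π p) ∧
      (p : ℕ) + 1 = a ∧ (q : ℕ) + 1 = b := by
  simp only [invh, Finset.mem_image, Finset.mem_filter, Finset.mem_univ, true_and,
    Prod.ext_iff, Prod.exists]

lemma mem_invh_intro {h : ℕ → ℕ} {n : ℕ} {π : Equiv.Perm (Fin n)} (p q : Fin n)
    (h1 : (p : ℕ) < (q : ℕ)) (h2 : (q : ℕ) + 1 ≤ h ((p : ℕ) + 1)) (h3 : π q < π p) :
    ((p : ℕ) + 1, (q : ℕ) + 1) ∈ invh h π :=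
  mem_invh.2 ⟨p, q, ⟨h1, h2, h3⟩, rfl, rfl⟩

lemma snd_le_of_mem_invh {h : ℕ → ℕ} {n : ℕ} {π : Equiv.Perm (Fin n)} {a b : ℕ}
    (hm : (a, b) ∈ invh h π) : b ≤ n := by
  obtain ⟨p, q, _, _, hq⟩ := mem_invh.1 hm
  omega

def padPerm {n : ℕ} (π : Equiv.Perm (Fin n)) : Equiv.Perm (Fin (n + 1)) :=
  (finSuccEquivLast.symm.permCongr) π.optionCongr

@[simp] lemma padPerm_castSucc {n : ℕ} (π : Equiv.Perm (Fin n)) (k : Fin n) :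
    padPerm π k.castSucc = (π k).castSucc := by
  simp [padPerm, Equiv.permCongr_apply, finSuccEquivLast_castSucc]

@[simp] lemma padPerm_last {n : ℕ} (π : Equiv.Perm (Fin n)) :
    padPerm π (Fin.last n) = Fin.last n := by
  simp [padPerm, Equiv.permCongr_apply, finSuccEquivLast_last]

lemma padPerm_injective {n : ℕ} : Function.Injective (padPerm (n := n)) := by
  intro π ρ hp
  ext k
  have := congrArg (fun e => (e k.castSucc : Fin (n+1))) hp
  simpa [Fin.castSucc_inj, Fin.ext_iff] using this

lemma exists_padPerm {n : ℕ} (π : Equiv.Perm (Fin (n + 1))) (hl : π (Fin.last n) = Fin.last n) :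
    ∃ σ : Equiv.Perm (Fin n), padPerm σ = π := by
  have hne : ∀ k : Fin n, π k.castSucc ≠ Fin.last n := by
    intro k hk
    have : (k.castSucc : Fin (n+1)) = Fin.last n := π.injective (hk.trans hl.symm)
    exact absurd this (Fin.castSucc_lt_last k).ne
  have hne' : ∀ k : Fin n, π.symm k.castSucc ≠ Fin.last n := by
    intro k hk
    have : π (Fin.last n) = k.castSucc := by rw [← hk, Equiv.apply_symm_apply]
    rw [hl] at this
    exact absurd this.symm (Fin.castSucc_lt_last k).ne
  refine ⟨⟨fun k => (π k.castSucc).castPred (hne k),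
    fun k => (π.symm k.castSucc).castPred (hne' k), ?_, ?_⟩, ?_⟩
  · intro k
    simp [Fin.castSucc_castPred, Fin.castPred_castSucc]
  · intro k
    simp [Fin.castSucc_castPred, Fin.castPred_castSucc]
  · ext x
    rcases Fin.eq_castSucc_or_eq_last x with ⟨k, rfl⟩ | rfl
    · simp [Fin.castSucc_castPred]
    · simp [hl]

lemma invh_padPerm (h : ℕ → ℕ) {n : ℕ} (π : Equiv.Perm (Fin n)) :
    invh h (padPerm π) = invh h π := by
  ext ⟨a, b⟩
  constructor
  · intro hm
    obtain ⟨p, q, ⟨hpq, hw, hv⟩, ha, hb⟩ := mem_invh.1 hm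
    rcases Fin.eq_castSucc_or_eq_last q with ⟨q', rfl⟩ | rfl
    · rcases Fin.eq_castSucc_or_eq_last p with ⟨p', rfl⟩ | rfl
      · rw [padPerm_castSucc, padPerm_castSucc] at hv
        subst ha hb
        exact mem_invh_intro p' q' (by simpa using hpq) (by simpa using hw)
          (by simpa using hv)
      · simp only [Fin.coe_castSucc, Fin.val_last] at hpq
        omega
    · rw [padPerm_last] at hv
      exact absurd (Fin.le_last _) (not_le.2 hv)
  · intro hm
    obtain ⟨p, q, ⟨hpq, hw, hv⟩, ha, hb⟩ := mem_invh.1 hm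
    have := mem_invh_intro (π := padPerm π) p.castSucc q.castSucc (by simpa using hpq)
      (by simpa using hw)
      (by simp only [padPerm_castSucc]; exact_mod_cast Fin.castSucc_lt_castSucc_iff.2 hv)
    simpa [ha, hb] using this

/-- The cycle sending `w ↦ last`, `x ↦ x - 1` for `x > w` (0-based), fixing `x < w`. -/
def gPerm {N : ℕ} (w : Fin (N + 1)) : Equiv.Perm (Fin (N + 1)) :=
  Fin.revPerm.trans ((Fin.cycleRange (Fin.rev w)).trans Fin.revPerm)

lemma gPerm_apply_of_lt {N : ℕ} {w x : Fin (N + 1)} (h : x < w) : gPerm w x = x := by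
  simp only [gPerm, Equiv.trans_apply, Fin.revPerm_apply]
  rw [Fin.cycleRange_of_gt (Fin.rev_lt_rev.2 h), Fin.rev_rev]

lemma gPerm_apply_of_eq {N : ℕ} {w : Fin (N + 1)} : gPerm w w = Fin.last N := by
  simp only [gPerm, Equiv.trans_apply, Fin.revPerm_apply]
  rw [Fin.cycleRange_of_eq rfl]
  apply Fin.ext
  simp [Fin.val_rev]

lemma gPerm_apply_of_gt {N : ℕ} {w x : Fin (N + 1)} (h : w < x) :
    (gPerm w x : Fin (N+1)).val = x.val - 1 := by
  simp only [gPerm, Equiv.trans_apply, Fin.revPerm_apply]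
  have h1 : Fin.rev x < Fin.rev w := Fin.rev_lt_rev.2 h
  rw [Fin.cycleRange_of_lt h1]
  have hx := x.isLt
  have hw := w.isLt
  have hxv : (Fin.rev x).val = N - x.val := by rw [Fin.val_rev]; omega
  have hlt : (Fin.rev x).val + 1 < N + 1 := by
    have := Fin.lt_def.1 h1
    have : (Fin.rev w).val ≤ N := Nat.lt_succ_iff.1 (Fin.rev w).isLt
    omega
  have : (Fin.rev x + 1).val = (Fin.rev x).val + 1 := Fin.val_add_one_of_lt (by
    rw [Fin.lt_iff_val_lt_val, Fin.val_last]; omega)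
  rw [Fin.val_rev, this, hxv]
  omega

section Main

variable {n : ℕ} (σ : Equiv.Perm (Fin n)) (i' : Fin n)

/-- The modified permutation: position `i'` gets the largest value, the old value of
position `i'` moves (after rank adjustment) so that the new last position gets `n`. -/
def modPerm : Equiv.Perm (Fin (n + 1)) :=
  (padPerm σ).trans (gPerm (Fin.castSucc (σ i')))

lemma modPerm_at_i : modPerm σ i' (Fin.castSucc i') = Fin.last n := by
  rw [modPerm, Equiv.trans_apply, padPerm_castSucc, gPerm_apply_of_eq]

lemma modPerm_at_last : (modPerm σ i' (Fin.last n)).val = n - 1 := by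
  rw [modPerm, Equiv.trans_apply, padPerm_last]
  have hv : (σ i').val < n := (σ i').isLt
  rw [gPerm_apply_of_gt (by rw [Fin.lt_def]; simpa using hv)]
  simp

lemma modPerm_val {k : Fin n} (hk : k ≠ i') :
    (modPerm σ i' (Fin.castSucc k)).val =
      if (σ k).val < (σ i').val then (σ k).val else (σ k).val - 1 := by
  rw [modPerm, Equiv.trans_apply, padPerm_castSucc]
  have hne : (σ k).val ≠ (σ i').val := by
    intro hh
    exact hk (σ.injective (Fin.ext hh))
  rcases lt_or_gt_of_ne hne with hlt | hgt
  · rw [gPerm_apply_of_lt (by rw [Fin.lt_def]; simpa using hlt)]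
    simp [hlt]
  · rw [gPerm_apply_of_gt (by rw [Fin.lt_def]; simpa using hgt)]
    simp only [Fin.coe_castSucc]
    rw [if_neg (by omega)]

lemma modPerm_lt_at_i {k : Fin n} (hk : k ≠ i') :
    modPerm σ i' (Fin.castSucc k) < modPerm σ i' (Fin.castSucc i') := by
  rw [modPerm_at_i, Fin.lt_def, Fin.val_last]
  rw [modPerm_val σ i' hk]
  have h1 : (σ k).val < n := (σ k).isLt
  have h2 : (σ i').val < n := (σ i').isLt
  split_ifs <;> omega

lemma modPerm_lt_at_last {k : Fin n} (hk : k ≠ i') :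
    modPerm σ i' (Fin.castSucc k) < modPerm σ i' (Fin.last n) := by
  rw [Fin.lt_def, modPerm_at_last, modPerm_val σ i' hk]
  have h1 : (σ k).val < n := (σ k).isLt
  have h2 : (σ i').val < n := (σ i').isLt
  have hne : (σ k).val ≠ (σ i').val := fun hh => hk (σ.injective (Fin.ext hh))
  split_ifs <;> omega

lemma modPerm_mono {k l : Fin n} (hk : k ≠ i') (hl : l ≠ i') :
    (modPerm σ i' (Fin.castSucc l) < modPerm σ i' (Fin.castSucc k) ↔ σ l < σ k) := by
  rw [Fin.lt_def, Fin.lt_def, modPerm_val σ i' hk, modPerm_val σ i' hl]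
  have hnk : (σ k).val ≠ (σ i').val := fun hh => hk (σ.injective (Fin.ext hh))
  have hnl : (σ l).val ≠ (σ i').val := fun hh => hl (σ.injective (Fin.ext hh))
  split_ifs <;> omega

end Main

lemma invh_modPerm {h : ℕ → ℕ} {n : ℕ} (σ : Equiv.Perm (Fin n)) (i' : Fin n)
    (Hhi : h ((i' : ℕ) + 1) ≤ n)
    (H1 : ∀ l : ℕ, (i' : ℕ) + 1 < l → l ≤ h ((i' : ℕ) + 1) → ((i' : ℕ) + 1, l) ∈ invh h σ)
    (H2 : ∀ k : ℕ, 1 ≤ k → k < (i' : ℕ) + 1 → (i' : ℕ) + 1 ≤ h k →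
      (k, (i' : ℕ) + 1) ∉ invh h σ) :
    invh h (modPerm σ i') = invh h σ := by
  ext ⟨a, b⟩
  constructor
  · intro hm
    obtain ⟨p, q, ⟨hpq, hw, hv⟩, ha, hb⟩ := mem_invh.1 hm
    rcases Fin.eq_castSucc_or_eq_last q with ⟨q', rfl⟩ | rfl
    · rcases Fin.eq_castSucc_or_eq_last p with ⟨p', rfl⟩ | rfl
      · by_cases hqi : q' = i'
        · exfalso
          have hne : p' ≠ i' := by
            intro hh; rw [hh, ← hqi] at hpq; simp at hpq
          rw [hqi] at hv
          exact absurd (modPerm_lt_at_i σ i' hne) (not_lt.2 hv.le)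
        · by_cases hpi : p' = i'
          · have hb' : b = (q' : ℕ) + 1 := by simpa using hb.symm
            have ha' : a = (i' : ℕ) + 1 := by rw [← ha, hpi]; simp
            have hib : (i' : ℕ) + 1 < b := by
              have h0 : (p' : ℕ) < (q' : ℕ) := by simpa using hpq
              rw [hpi] at h0; omega
            have hbh : b ≤ h ((i' : ℕ) + 1) := by
              have := hw
              simp only [Fin.coe_castSucc] at this
              rw [hpi] at this; omega
            rw [ha', hb']
            exact H1 ((q' : ℕ) + 1) (by omega) (by omega)
          · have hσ : σ q' < σ p' := (modPerm_mono σ i' hpi hqi).1 hv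
            have := mem_invh_intro p' q' (by simpa using hpq) (by simpa using hw) hσ
            rw [← ha, ← hb]
            simpa using this
      · exfalso
        have h0 : (Fin.last n : ℕ) < (q' : ℕ) := by simpa using hpq
        have := q'.isLt
        simp only [Fin.val_last] at h0
        omega
    · rcases Fin.eq_castSucc_or_eq_last p with ⟨p', rfl⟩ | rfl
      · exfalso
        by_cases hpi : p' = i'
        · have hb' : b = n + 1 := by simpa using hb.symm
          have hbw : b ≤ h ((i' : ℕ) + 1) := by
            have := hw
            simp only [Fin.val_last, Fin.coe_castSucc] at this
            rw [hpi] at this; omega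
          omega
        · exact absurd (modPerm_lt_at_last σ i' hpi) (not_lt.2 hv.le)
      · exact absurd hpq (lt_irrefl _)
  · intro hm
    obtain ⟨p, q, ⟨hpq, hw, hv⟩, ha, hb⟩ := mem_invh.1 hm
    by_cases hqi : q = i'
    · exfalso
      have hb2 : b = (i' : ℕ) + 1 := by rw [← hb, hqi]
      rw [hb2] at hm
      refine H2 a (by omega) ?_ ?_ hm
      · have h0 : (p : ℕ) < (q : ℕ) := hpq
        rw [hqi] at h0; omega
      · rw [← ha]
        have h0 := hw
        rw [hqi] at h0
        exact h0
    · by_cases hpi : p = i'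
      · have hlt : modPerm σ i' (Fin.castSucc q) < modPerm σ i' (Fin.castSucc i') :=
          modPerm_lt_at_i σ i' hqi
        have := mem_invh_intro (π := modPerm σ i') (Fin.castSucc i') (Fin.castSucc q)
          (by simp only [Fin.coe_castSucc]; rw [← hpi]; exact hpq)
          (by simp only [Fin.coe_castSucc]; rw [← hpi]; exact hw) hlt
        rw [← ha, ← hb, hpi]
        simpa using this
      · have hlt : modPerm σ i' (Fin.castSucc q) < modPerm σ i' (Fin.castSucc p) :=
          (modPerm_mono σ i' hpi hqi).2 hv
        have := mem_invh_intro (π := modPerm σ i') (Fin.castSucc p) (Fin.castSucc q)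
          (by simpa using hpq) (by simpa using hw) hlt
        rw [← ha, ← hb]
        simpa using this

lemma mem_Ih {h : ℕ → ℕ} {S : Finset (ℕ × ℕ)} {n : ℕ} {π : Equiv.Perm (Fin n)} :
    π ∈ Ih h S n ↔ invh h π = S := by simp [Ih]

lemma jS_le {h : ℕ → ℕ} {S : Finset (ℕ × ℕ)} {n : ℕ} {π : Equiv.Perm (Fin n)}
    (hπ : π ∈ Ih h S n) : jS S ≤ n := by
  rw [mem_Ih] at hπ
  refine Finset.sup_le fun p hp => ?_
  rw [← hπ] at hp
  obtain ⟨a, b⟩ := p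
  exact snd_le_of_mem_invh hp

/-- A bad index, as in the statement. -/
def Bad (h : ℕ → ℕ) (S : Finset (ℕ × ℕ)) : Prop :=
  ∃ i : ℕ, 1 ≤ i ∧ i ≤ mS S ∧
    (∀ j : ℕ, i < j → j ≤ h i → (i, j) ∈ S) ∧
    (∀ k : ℕ, 1 ≤ k → k < i → i ≤ h k → (k, i) ∉ S)

lemma last_eq_of_noBad {h : ℕ → ℕ} (hgt : ∀ i : ℕ, 0 < i → i < h i)
    {S : Finset (ℕ × ℕ)} (noBad : ¬ Bad h S) {n : ℕ} (hn : jS S ≤ n)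
    {π : Equiv.Perm (Fin (n + 1))} (hπ : π ∈ Ih h S (n + 1)) :
    π (Fin.last n) = Fin.last n := by
  rw [mem_Ih] at hπ
  by_contra hne
  set p : Fin (n + 1) := π.symm (Fin.last n) with hp
  have hπp : π p = Fin.last n := Equiv.apply_symm_apply _ _
  have hpne : p ≠ Fin.last n := by
    intro hh
    rw [hh] at hπp
    exact hne hπp
  obtain ⟨p', hp'⟩ : ∃ p' : Fin n, Fin.castSucc p' = p := by
    rcases Fin.eq_castSucc_or_eq_last p with ⟨p', hh⟩ | hh
    · exact ⟨p', hh.symm⟩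
    · exact absurd hh hpne
  set i : ℕ := (p' : ℕ) + 1 with hidef
  have stepA : ∀ q : Fin (n + 1), (p : ℕ) < (q : ℕ) → (q : ℕ) + 1 ≤ h i →
      (i, (q : ℕ) + 1) ∈ S := by
    intro q hq hqh
    have hqp : q ≠ p := by
      intro hh; rw [hh] at hq; omega
    have hlt : π q < π p := by
      rw [hπp]
      refine lt_of_le_of_ne (Fin.le_last _) ?_
      intro hh
      exact hqp (π.injective (hh.trans hπp.symm))
    have := mem_invh_intro (π := π) p q hq
      (by rw [← hp', Fin.coe_castSucc] at hq ⊢; exact hqh) hlt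
    rw [hπ] at this
    rw [← hp', Fin.coe_castSucc] at this
    exact this
  have hpv : (p : ℕ) = i - 1 := by rw [← hp']; simp [hidef]
  have hhin : h i ≤ n := by
    by_contra hcon
    have := stepA (Fin.last n) (by rw [hpv, Fin.val_last]; have := p'.isLt; omega)
      (by rw [Fin.val_last]; omega)
    have hle : n + 1 ≤ jS S := Finset.le_sup (f := Prod.snd) this
    omega
  apply noBad
  refine ⟨i, by omega, ?_, ?_, ?_⟩
  · have hii : i < h i := hgt i (by omega)
    have hiv : i < n + 1 := by have := p'.isLt; omega
    have hmem : (i, i + 1) ∈ S := by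
      have := stepA ⟨i, hiv⟩ (by rw [hpv]; simp only [Fin.val_mk]; omega)
        (by simp only [Fin.val_mk]; omega)
      simpa using this
    exact Finset.le_sup (f := Prod.fst)
      (Finset.mem_filter.2 ⟨hmem, by simp⟩)
  · intro l hl hlh
    have hlv : l - 1 < n + 1 := by omega
    have := stepA ⟨l - 1, hlv⟩ (by rw [hpv]; simp only [Fin.val_mk]; omega)
      (by simp only [Fin.val_mk]; omega)
    have hsimp : (⟨l - 1, hlv⟩ : Fin (n+1)).val + 1 = l := by simp only [Fin.val_mk]; omega
    rw [hsimp] at this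
    exact this
  · intro k hk1 hki hkh hmem
    rw [← hπ] at hmem
    obtain ⟨p1, q1, ⟨hpq1, hw1, hv1⟩, ha1, hb1⟩ := mem_invh.1 hmem
    have hq1 : q1 = p := by
      apply Fin.ext
      rw [hpv]
      omega
    rw [hq1, hπp] at hv1
    exact absurd (Fin.le_last (π p1)) (not_le.2 hv1)

lemma icount_succ_of_noBad {h : ℕ → ℕ} (hgt : ∀ i : ℕ, 0 < i → i < h i)
    {S : Finset (ℕ × ℕ)} (noBad : ¬ Bad h S) {n : ℕ} (hn : jS S ≤ n) :
    Icount h S (n + 1) = Icount h S n := by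
  symm
  apply Finset.card_bij (fun σ _ => padPerm σ)
  · intro σ hσ
    rw [mem_Ih] at hσ ⊢
    rw [invh_padPerm, hσ]
  · intro σ₁ h₁ σ₂ h₂ heq
    exact padPerm_injective heq
  · intro π hπ
    obtain ⟨σ, hσ⟩ := exists_padPerm π (last_eq_of_noBad hgt noBad hn hπ)
    refine ⟨σ, ?_, hσ⟩
    rw [mem_Ih] at hπ ⊢
    rw [← invh_padPerm h σ, hσ, hπ]

lemma icount_const_of_noBad {h : ℕ → ℕ} (hgt : ∀ i : ℕ, 0 < i → i < h i)
    {S : Finset (ℕ × ℕ)} (noBad : ¬ Bad h S) :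
    ∀ n : ℕ, jS S ≤ n → Icount h S n = Icount h S (jS S) := by
  intro n hn
  induction n, hn using Nat.le_induction with
  | base => rfl
  | succ n hn ih => rw [icount_succ_of_noBad hgt noBad hn, ih]

lemma not_const_of_bad {h : ℕ → ℕ} (hgt : ∀ i : ℕ, 0 < i → i < h i)
    {S : Finset (ℕ × ℕ)} (hadm : Admissible h S) (bad : Bad h S) :
    ¬ (∀ n : ℕ, jS S ≤ n → Icount h S n = Icount h S (jS S)) := by
  obtain ⟨i, hi1, _, hB1, hB2⟩ := bad
  obtain ⟨n, σ, hσ⟩ := hadm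
  have hS : invh h σ = S := mem_Ih.1 hσ
  have hj : jS S ≤ n := jS_le hσ
  have hi_lt : i < h i := hgt i hi1
  have hhij : h i ≤ jS S := Finset.le_sup (f := Prod.snd) (hB1 (h i) hi_lt le_rfl)
  have hin : i - 1 < n := by omega
  set i' : Fin n := ⟨i - 1, hin⟩ with hi'def
  have He : (i' : ℕ) + 1 = i := by simp [hi'def]; omega
  have hmod : invh h (modPerm σ i') = S := by
    rw [invh_modPerm σ i' (by rw [He]; omega)
      (fun l hl hlh => by rw [He] at hl hlh ⊢; rw [hS]; exact hB1 l hl hlh)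
      (fun k hk1 hk2 hk3 => by rw [He] at hk2 hk3 ⊢; rw [hS]; exact hB2 k hk1 hk2 hk3), hS]
  have hlast_ne : modPerm σ i' (Fin.last n) ≠ Fin.last n := by
    intro hh
    have := modPerm_at_last σ i'
    rw [hh, Fin.val_last] at this
    omega
  have himg : (Ih h S n).image padPerm ⊆ Ih h S (n + 1) := by
    intro τ hτ
    obtain ⟨ρ, hρ, rfl⟩ := Finset.mem_image.1 hτ
    rw [mem_Ih, invh_padPerm, mem_Ih.1 hρ]
  have hnotmem : modPerm σ i' ∉ (Ih h S n).image padPerm := by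
    intro hmem
    obtain ⟨ρ, _, heq⟩ := Finset.mem_image.1 hmem
    apply hlast_ne
    rw [← heq, padPerm_last]
  have hcard : Icount h S n + 1 ≤ Icount h S (n + 1) := by
    have e1 : Icount h S n = ((Ih h S n).image padPerm).card :=
      (Finset.card_image_of_injective _ padPerm_injective).symm
    have e2 : (insert (modPerm σ i') ((Ih h S n).image padPerm)).card
        = ((Ih h S n).image padPerm).card + 1 := Finset.card_insert_of_notMem hnotmem
    have e3 : insert (modPerm σ i') ((Ih h S n).image padPerm) ⊆ Ih h S (n + 1) :=
      Finset.insert_subset (mem_Ih.2 hmod) himg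
    have := Finset.card_le_card e3
    rw [e2] at this
    rw [e1]
    exact this
  intro hconst
  have e1 := hconst n hj
  have e2 := hconst (n + 1) (by omega)
  omega

/-- `𝓘_h(S;n)` is constant for `n ≥ j(S)` iff there is no positive `i ≤ m(S)` with
`(i,j) ∈ S` for all `i < j ≤ h(i)` and `(k,i) ∉ S` for all `k < i ≤ h(k)`. -/
theorem stmt11 (h : ℕ → ℕ) (hmono : ∀ ⦃i j : ℕ⦄, 0 < i → i ≤ j → h i ≤ h j)
    (hgt : ∀ i : ℕ, 0 < i → i < h i) (S : Finset (ℕ × ℕ)) (hSne : S.Nonempty)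
    (hadm : Admissible h S) :
    (∀ n : ℕ, jS S ≤ n → Icount h S n = Icount h S (jS S)) ↔
      ¬ ∃ i : ℕ, 1 ≤ i ∧ i ≤ mS S ∧
        (∀ j : ℕ, i < j → j ≤ h i → (i, j) ∈ S) ∧
        (∀ k : ℕ, 1 ≤ k → k < i → i ≤ h k → (k, i) ∉ S) := by
  constructor
  · intro hconst hbad
    exact not_const_of_bad hgt hadm hbad hconst
  · intro noBad n hn
    exact icount_const_of_noBad hgt noBad n hn
end

section
/- Let S be a nonempty h-admissible set, m := m(S), n ≥ h(m), and let k satisfy h(m) − m ≤ k ≤ h(m). If π ∈ I_h(S,n) with π_{h(m)} = k, then the total number of inversions of π satisfies ℓ(π) = ℓ(π|_{h(m)}) + ℓ_{[k+1,n]}([k+1,n] \ {π_{h(m)+1}, …, π_n}). -/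
open Finset

/-!
Split the inversions `(i, j)` of `π` according to whether `j ≤ h(m)`. Those with `j ≤ h(m)` are
the inversions of the flattening `π|_{h(m)}`. Since `m` is the last descent and `m < h(m)`, `π`
increases from position `h(m)` on, so the remaining inversions have `i < h(m) < j`, and
`(i, j) ↦ (π_i, π_j)` identifies them with the pairs `x > y` in `[k+1, n]` where `y` is a value of
the tail `π_{h(m)+1} ⋯ π_n` and `x` is not.
-/

lemma Fin.lt_of_forall_lt_succ {α : Type*} [Preorder α] {n a : ℕ} (f : Fin n → α)
    (hf : ∀ (i : Fin n) (hi : (i : ℕ) + 1 < n), a ≤ i → f i < f ⟨i + 1, hi⟩)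
    {i j : Fin n} (hai : a ≤ i) (hij : i < j) : f i < f j := by
  obtain ⟨j, hj⟩ := j
  induction j with
  | zero => exact absurd hij (Nat.not_lt_zero _)
  | succ j ih =>
    have hij' : (i : ℕ) ≤ j := Nat.lt_succ_iff.mp hij
    have hstep : f ⟨j, by omega⟩ < f ⟨j + 1, hj⟩ := hf ⟨j, by omega⟩ hj (hai.trans hij')
    rcases hij'.lt_or_eq with hlt | heq
    · exact (ih (by omega) hlt).trans hstep
    · rwa [show i = ⟨j, by omega⟩ from Fin.ext heq]

lemma le_mS_of_mem {S : Finset (ℕ × ℕ)} {i : ℕ} (hi : (i, i + 1) ∈ S) : i ≤ mS S :=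
  le_sup (f := Prod.fst) (b := (i, i + 1)) (s := S.filter fun p => p.2 = p.1 + 1)
    (mem_filter.mpr ⟨hi, rfl⟩)

section invh

variable {h : ℕ → ℕ} (hgt : ∀ i : ℕ, 0 < i → i < h i) {n : ℕ} (π : Equiv.Perm (Fin n))
include hgt

lemma mem_invh_of_descent (i : Fin n) (hi : (i : ℕ) + 1 < n) (hdesc : π ⟨i + 1, hi⟩ < π i) :
    ((i : ℕ) + 1, (i : ℕ) + 1 + 1) ∈ invh h π :=
  mem_image.mpr ⟨(i, ⟨i + 1, hi⟩),
    mem_filter.mpr ⟨mem_univ _, Nat.lt_succ_self _, hgt _ i.succ_pos, hdesc⟩, rfl⟩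

-- Positions are 0-based: `mS ≤ i` puts the 1-based position `i + 1` past the last descent.
lemma lt_of_mS_invh_le {i j : Fin n} (hi : mS (invh h π) ≤ i) (hij : i < j) : π i < π j := by
  refine Fin.lt_of_forall_lt_succ π (fun i hi1 hmi => ?_) hi hij
  by_contra hasc
  have hdesc : π ⟨i + 1, hi1⟩ < π i :=
    lt_of_le_of_ne (not_lt.mp hasc) (π.injective.ne (by simp [Fin.ext_iff]))
  have := le_mS_of_mem (mem_invh_of_descent hgt π i hi1 hdesc)
  omega

lemma one_le_mS_invh (hne : (invh h π).Nonempty) : 1 ≤ mS (invh h π) := by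
  by_contra! hm
  obtain ⟨_, hp⟩ := hne
  obtain ⟨q, hq, -⟩ := mem_image.mp hp
  obtain ⟨-, hlt, -, hinv⟩ := mem_filter.mp hq
  exact (lt_of_mS_invh_le hgt π (by omega) hlt).not_gt hinv

end invh

section length

variable {n : ℕ} (π : Equiv.Perm (Fin n))

def inversions : Finset (Fin n × Fin n) :=
  Finset.univ.filter fun p => p.1 < p.2 ∧ π p.2 < π p.1

lemma mem_inversions {p : Fin n × Fin n} : p ∈ inversions π ↔ p.1 < p.2 ∧ π p.2 < π p.1 := by
  simp [inversions]

lemma lenPerm_eq_card_inversions : lenPerm π = (inversions π).card := rfl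

lemma entry_succ (j : Fin n) : entry π (j + 1) = π j + 1 := by
  simp [entry]

lemma mem_image_entry_Icc_iff {H x : ℕ} :
    x ∈ (Finset.Icc (H + 1) n).image (entry π) ↔ ∃ j : Fin n, H ≤ j ∧ (π j : ℕ) + 1 = x := by
  constructor
  · intro hx
    obtain ⟨q, hq, rfl⟩ := mem_image.mp hx
    obtain ⟨hHq, hqn⟩ := mem_Icc.mp hq
    refine ⟨⟨q - 1, by omega⟩, by simp; omega, ?_⟩
    rw [← entry_succ]
    congr 1
    simp; omega
  · rintro ⟨j, hHj, rfl⟩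
    exact mem_image.mpr ⟨j + 1, mem_Icc.mpr ⟨by omega, j.isLt⟩, entry_succ π j⟩

lemma card_inversions_lt_eq_lenPerm {H : ℕ} (hn : H ≤ n) (σ : Equiv.Perm (Fin H))
    (hσ : ∀ i j : Fin H, σ i < σ j ↔ π (Fin.castLE hn i) < π (Fin.castLE hn j)) :
    ((inversions π).filter fun p => (p.2 : ℕ) < H).card = lenPerm σ := by
  refine (card_bij (fun p _ => (Fin.castLE hn p.1, Fin.castLE hn p.2)) ?_ ?_ ?_).symm
  · intro p hp
    obtain ⟨hlt, hinv⟩ := (mem_inversions σ).mp hp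
    exact mem_filter.mpr ⟨(mem_inversions π).mpr ⟨hlt, (hσ _ _).mp hinv⟩, p.2.isLt⟩
  · intro p _ q _ hpq
    simp only [Prod.mk.injEq, Fin.castLE_inj] at hpq
    exact Prod.ext hpq.1 hpq.2
  · rintro ⟨a, b⟩ hab
    obtain ⟨hab, hbH : (b : ℕ) < H⟩ := mem_filter.mp hab
    obtain ⟨hlt : a < b, hinv⟩ := (mem_inversions π).mp hab
    refine ⟨(⟨a, by omega⟩, ⟨b, hbH⟩), (mem_inversions σ).mpr ⟨hlt, (hσ _ _).mpr hinv⟩, rfl⟩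

lemma entry_lt_of_le {H : ℕ} (hH : 0 < H) (hn : H ≤ n)
    (htail : ∀ i j : Fin n, H - 1 ≤ i → i < j → π i < π j) {j : Fin n} (hj : H ≤ j) :
    entry π H < π j + 1 := by
  have hk : entry π H = π ⟨H - 1, by omega⟩ + 1 := by
    rw [← entry_succ]
    congr 1
    simp only
    omega
  rw [hk, add_lt_add_iff_right, ← Fin.lt_def]
  exact htail _ _ le_rfl (Fin.lt_def.mpr (by simp only; omega))

lemma card_inversions_ge_eq_lenSet {H : ℕ} (hH : 0 < H) (hn : H ≤ n)
    (htail : ∀ i j : Fin n, H - 1 ≤ i → i < j → π i < π j) :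
    ((inversions π).filter fun p => ¬ (p.2 : ℕ) < H).card =
      lenSet (entry π H + 1) n
        (Finset.Icc (entry π H + 1) n \ (Finset.Icc (H + 1) n).image (entry π)) := by
  set T := (Finset.Icc (H + 1) n).image (entry π)
  have hT {x : ℕ} : x ∈ T ↔ ∃ j : Fin n, H ≤ j ∧ (π j : ℕ) + 1 = x := mem_image_entry_Icc_iff π
  refine card_bij (fun p _ => ((π p.1 : ℕ) + 1, (π p.2 : ℕ) + 1)) ?_ ?_ ?_
  · rintro ⟨a, b⟩ hp
    obtain ⟨hp, hbH⟩ := mem_filter.mp hp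
    obtain ⟨hab, hinv⟩ := (mem_inversions π).mp hp
    have hbH : H ≤ (b : ℕ) := not_lt.mp hbH
    have hinv : (π b : ℕ) < π a := hinv
    have haT : (π a : ℕ) + 1 ∉ T := by
      intro haT
      obtain ⟨j, hHj, hja⟩ := hT.mp haT
      obtain rfl : j = a := π.injective (Fin.ext (by omega))
      exact (htail j b (by omega) hab).not_gt hinv
    have hkb := entry_lt_of_le π hH hn htail hbH
    simp only [mem_filter, mem_product, mem_Icc, mem_sdiff, not_and, not_not]
    exact ⟨⟨⟨by omega, (π a).isLt⟩, by omega, (π b).isLt⟩, by omega, ⟨⟨by omega, (π a).isLt⟩, haT⟩,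
      fun _ => hT.mpr ⟨b, hbH, rfl⟩⟩
  · intro p _ q _ hpq
    simp only [Prod.mk.injEq, add_left_inj, Fin.val_inj, π.injective.eq_iff] at hpq
    exact Prod.ext hpq.1 hpq.2
  · rintro ⟨x, y⟩ hq
    simp only [mem_filter, mem_product, mem_Icc, mem_sdiff, not_and, not_not] at hq
    obtain ⟨⟨⟨hkx, hxn⟩, hky, hyn⟩, hyx, ⟨-, hxT⟩, hyT⟩ := hq
    obtain ⟨b, hbH, rfl⟩ := hT.mp (hyT ⟨hky, hyn⟩)
    obtain ⟨a, ha⟩ := π.surjective ⟨x - 1, by omega⟩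
    have hπa : (π a : ℕ) = x - 1 := by rw [ha]
    have haH : (a : ℕ) < H := by
      by_contra haH
      exact hxT (hT.mpr ⟨a, not_lt.mp haH, by omega⟩)
    refine ⟨(a, b), mem_filter.mpr ⟨(mem_inversions π).mpr
      ⟨Fin.lt_def.mpr (by dsimp only; omega), Fin.lt_def.mpr (by dsimp only; omega)⟩,
        by dsimp only; omega⟩, ?_⟩
    simp only [Prod.mk.injEq, and_true]
    omega

theorem lenPerm_eq_lenPerm_add_lenSet {H : ℕ} (hH : 0 < H) (hn : H ≤ n) (σ : Equiv.Perm (Fin H))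
    (hσ : ∀ i j : Fin H, σ i < σ j ↔ π (Fin.castLE hn i) < π (Fin.castLE hn j))
    (htail : ∀ i j : Fin n, H - 1 ≤ i → i < j → π i < π j) :
    lenPerm π = lenPerm σ + lenSet (entry π H + 1) n
      (Finset.Icc (entry π H + 1) n \ (Finset.Icc (H + 1) n).image (entry π)) := by
  rw [lenPerm_eq_card_inversions, ← card_filter_add_card_filter_not (fun p => (p.2 : ℕ) < H),
    card_inversions_lt_eq_lenPerm π hn σ hσ, card_inversions_ge_eq_lenSet π hH hn htail]

end length

theorem stmt15_general (h : ℕ → ℕ)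
    (hgt : ∀ i : ℕ, 0 < i → i < h i) (S : Finset (ℕ × ℕ)) (hSne : S.Nonempty)
    (n k : ℕ) (hn : h (mS S) ≤ n)
    (π : Equiv.Perm (Fin n)) (hπ : π ∈ Ih h S n) (hπk : entry π (h (mS S)) = k)
    (σ : Equiv.Perm (Fin (h (mS S))))
    (hσ : ∀ i j : Fin (h (mS S)), σ i < σ j ↔ π (Fin.castLE hn i) < π (Fin.castLE hn j)) :
    lenPerm π =
      lenPerm σ +
        lenSet (k + 1) n
          (Finset.Icc (k + 1) n \ ((Finset.Icc (h (mS S) + 1) n).image (entry π))) := by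
  obtain rfl : invh h π = S := (mem_filter.mp hπ).2
  subst hπk
  have hm : 1 ≤ mS (invh h π) := one_le_mS_invh hgt π hSne
  have hmH : mS (invh h π) < h (mS (invh h π)) := hgt _ hm
  exact lenPerm_eq_lenPerm_add_lenSet π (by omega) hn σ hσ
    fun i j hi hij => lt_of_mS_invh_le hgt π (by omega) hij

/-- If `π ∈ I_h(S,n)` with `π_{h(m)} = k` (where `h(m)−m ≤ k ≤ h(m)` and `n ≥ h(m)`),
and `σ = π|_{h(m)}` is the flattening of `π`, then
`ℓ(π) = ℓ(σ) + ℓ_{[k+1,n]}([k+1,n] \ {π_{h(m)+1},…,π_n})`. -/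
theorem stmt15 (h : ℕ → ℕ) (hmono : ∀ ⦃i j : ℕ⦄, 0 < i → i ≤ j → h i ≤ h j)
    (hgt : ∀ i : ℕ, 0 < i → i < h i) (S : Finset (ℕ × ℕ)) (hSne : S.Nonempty)
    (hadm : Admissible h S) (n k : ℕ) (hn : h (mS S) ≤ n)
    (hk1 : h (mS S) - mS S ≤ k) (hk2 : k ≤ h (mS S))
    (π : Equiv.Perm (Fin n)) (hπ : π ∈ Ih h S n) (hπk : entry π (h (mS S)) = k)
    (σ : Equiv.Perm (Fin (h (mS S))))
    (hσ : ∀ i j : Fin (h (mS S)), σ i < σ j ↔ π (Fin.castLE hn i) < π (Fin.castLE hn j)) :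
    lenPerm π =
      lenPerm σ +
        lenSet (k + 1) n
          (Finset.Icc (k + 1) n \ ((Finset.Icc (h (mS S) + 1) n).image (entry π))) :=
  stmt15_general h hgt S hSne n k hn π hπ hπk σ hσ
end
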